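/- Let F be a field of characteristic ≠ 2,3 containing a primitive cube root of unity ρ, and let C be the F-algebra generated by x, y₁, y₂ subject to: x³ = α ∈ F^×, y₁x = ρxy₁, y₂x = ρ²xy₂, y₁y₂ = ρ y₂y₁ + γ·1 for some γ ∈ F (this is the relation arising from a Clifford algebra of a binary cubic form with β-term eliminated; here the scalar terms D₁, D₂ specialize). Then the elements w := x⁻¹y₂y₁ + c₁x + c₂x⁻¹ (for the appropriate scalars c₁, c₂ determined by the defining relation), y₁³, and y₂³ are central in C. -/

import Mathlib

/-!
Write `z := y₂y₁ + c` with `(ρ - 1) c = γ`. The relation `y₁y₂ = ρy₂y₁ + γ` then becomes the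
homogeneous `y₁z = ρzy₁` and `zy₂ = ρy₂z`, while conjugation by `x⁻¹` scales `y₁` by `ρ` and `y₂`
by `ρ²`, so every scalar picked up by `w = x⁻¹z` is a power of `ρ³ = 1`. For the cubes, iterating
`ab = qba + γ` gives `a³b = q³ba³ + (1 + q + q²)γa²`, and both factors vanish at a primitive cube
root of unity.
-/

open Finset

def SkewCommute {R A : Type*} [CommSemiring R] [Semiring A] [Algebra R A]
    (q : R) (a b : A) : Prop :=
  a * b = q • (b * a)

namespace SkewCommute

variable {R A : Type*} [CommSemiring R] [Semiring A] [Algebra R A] {p q q' : R} {a b c : A}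

theorem symm (h : SkewCommute q a b) (hq : q' * q = 1) : SkewCommute q' b a := by
  rw [SkewCommute, h, smul_smul, hq, one_smul]

theorem mul_left (ha : SkewCommute p a c) (hb : SkewCommute q b c) :
    SkewCommute (p * q) (a * b) c := by
  rw [SkewCommute, mul_assoc, hb, mul_smul_comm, ← mul_assoc, ha, smul_mul_assoc, smul_smul,
    mul_comm p, mul_assoc]

theorem commute (h : SkewCommute q a b) (hq : q = 1) : Commute a b := by
  rw [SkewCommute, hq, one_smul] at h
  exact h

theorem units_inv_left {u : Aˣ} (h : SkewCommute q b u) : SkewCommute q (↑u⁻¹ : A) b :=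
  calc (↑u⁻¹ : A) * b = ↑u⁻¹ * (b * u) * ↑u⁻¹ := by simp [mul_assoc]
    _ = q • (b * ↑u⁻¹) := by
      rw [h, mul_smul_comm, smul_mul_assoc, ← mul_assoc, u.inv_mul, one_mul]

end SkewCommute

section InhomogeneousRelation

variable {R A : Type*} [CommSemiring R] [Semiring A] [Algebra R A] {q γ c : R} {a b : A}

theorem pow_succ_mul_of_mul_eq_smul_mul_add (h : a * b = q • (b * a) + algebraMap R A γ)
    (n : ℕ) : a ^ (n + 1) * b =
      q ^ (n + 1) • (b * a ^ (n + 1)) + ((∑ i ∈ range (n + 1), q ^ i) * γ) • a ^ n := by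
  induction n with
  | zero => simp [h, Algebra.algebraMap_eq_smul_one]
  | succ n ih =>
    calc a ^ (n + 2) * b = a * (a ^ (n + 1) * b) := by rw [pow_succ' a (n + 1), mul_assoc]
      _ = q ^ (n + 1) • ((a * b) * a ^ (n + 1)) +
            ((∑ i ∈ range (n + 1), q ^ i) * γ) • a ^ (n + 1) := by
        rw [ih, mul_add, mul_smul_comm, mul_smul_comm, ← mul_assoc, ← pow_succ']
      _ = _ := by
        rw [h, Algebra.algebraMap_eq_smul_one, sum_range_succ (n := n + 1)]
        simp only [add_mul, smul_mul_assoc, one_mul, mul_assoc, ← pow_succ']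
        module

theorem skewCommute_mul_add_algebraMap_left (h : a * b = q • (b * a) + algebraMap R A γ)
    (hc : q * c = c + γ) : SkewCommute q a (b * a + algebraMap R A c) := by
  rw [SkewCommute, mul_add, ← mul_assoc, h]
  simp only [Algebra.algebraMap_eq_smul_one, add_mul, smul_mul_assoc, mul_smul_comm, one_mul,
    mul_one, mul_assoc, smul_add, smul_smul, hc, add_smul]
  abel

theorem skewCommute_mul_add_algebraMap_right (h : a * b = q • (b * a) + algebraMap R A γ)
    (hc : q * c = c + γ) : SkewCommute q (b * a + algebraMap R A c) b := by
  rw [SkewCommute, add_mul, mul_assoc, h]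
  simp only [Algebra.algebraMap_eq_smul_one, mul_add, smul_mul_assoc, mul_smul_comm, one_mul,
    mul_one, smul_add, smul_smul, hc, add_smul]
  abel

end InhomogeneousRelation

theorem mul_eq_smul_mul_add_of_mul_eq {R A : Type*} [CommRing R] [Ring A] [Algebra R A]
    {q q' γ : R} {a b : A} (h : a * b = q • (b * a) + algebraMap R A γ)
    (hq : q' * q = 1) : b * a = q' • (a * b) + algebraMap R A (-(q' * γ)) := by
  rw [Algebra.algebraMap_eq_smul_one, h, smul_add, smul_smul, hq, one_smul,
    Algebra.algebraMap_eq_smul_one, smul_smul]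
  module

theorem commute_pow_three_of_mul_eq_smul_mul_add {R A : Type*} [CommRing R] [IsDomain R]
    [Ring A] [Algebra R A] {q γ : R} {a b : A} (hq : IsPrimitiveRoot q 3)
    (h : a * b = q • (b * a) + algebraMap R A γ) : Commute (a ^ 3) b := by
  have := pow_succ_mul_of_mul_eq_smul_mul_add h 2
  rwa [hq.pow_eq_one, hq.geom_sum_eq_zero (by norm_num), zero_mul, zero_smul, add_zero,
    one_smul] at this

theorem clifford_cubic_central_elements_general
    {F A : Type*} [Field F] [Ring A] [Algebra F A]
    (ρ : F) (hρ : IsPrimitiveRoot ρ 3)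
    (γ : F)
    (x : Aˣ) (y₁ y₂ : A)
    (h1 : y₁ * (x : A) = ρ • ((x : A) * y₁))
    (h2' : y₂ * (x : A) = ρ ^ 2 • ((x : A) * y₂))
    (h12 : y₁ * y₂ = ρ • (y₂ * y₁) + algebraMap F A γ) :
    ∃ c₁ c₂ : F,
      (((x⁻¹ : Aˣ) : A) * (y₂ * y₁) + c₁ • (x : A) + c₂ • ((x⁻¹ : Aˣ) : A)) * (x : A)
          = (x : A) * (((x⁻¹ : Aˣ) : A) * (y₂ * y₁) + c₁ • (x : A) + c₂ • ((x⁻¹ : Aˣ) : A)) ∧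
      (((x⁻¹ : Aˣ) : A) * (y₂ * y₁) + c₁ • (x : A) + c₂ • ((x⁻¹ : Aˣ) : A)) * y₁
          = y₁ * (((x⁻¹ : Aˣ) : A) * (y₂ * y₁) + c₁ • (x : A) + c₂ • ((x⁻¹ : Aˣ) : A)) ∧
      (((x⁻¹ : Aˣ) : A) * (y₂ * y₁) + c₁ • (x : A) + c₂ • ((x⁻¹ : Aˣ) : A)) * y₂
          = y₂ * (((x⁻¹ : Aˣ) : A) * (y₂ * y₁) + c₁ • (x : A) + c₂ • ((x⁻¹ : Aˣ) : A)) ∧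
      (y₁ ^ 3 * (x : A) = (x : A) * y₁ ^ 3 ∧ y₁ ^ 3 * y₁ = y₁ * y₁ ^ 3 ∧
        y₁ ^ 3 * y₂ = y₂ * y₁ ^ 3) ∧
      (y₂ ^ 3 * (x : A) = (x : A) * y₂ ^ 3 ∧ y₂ ^ 3 * y₁ = y₁ * y₂ ^ 3 ∧
        y₂ ^ 3 * y₂ = y₂ * y₂ ^ 3) := by
  have hρ2 : IsPrimitiveRoot (ρ ^ 2) 3 := hρ.pow_of_coprime 2 (by norm_num)
  have hρ2ρ : ρ ^ 2 * ρ = 1 := by rw [← pow_succ, hρ.pow_eq_one]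
  have hρρ2 : ρ * ρ ^ 2 = 1 := by rw [mul_comm, hρ2ρ]
  have hρ1 : ρ - 1 ≠ 0 := sub_ne_zero.2 (hρ.ne_one (by norm_num))
  obtain ⟨c, hc⟩ : ∃ c : F, ρ * c = c + γ := ⟨γ / (ρ - 1), by field_simp; ring⟩
  set z := y₂ * y₁ + algebraMap F A c
  have hw : ((x⁻¹ : Aˣ) : A) * (y₂ * y₁) + (0 : F) • (x : A) + c • ((x⁻¹ : Aˣ) : A)
      = ((x⁻¹ : Aˣ) : A) * z := by
    rw [zero_smul, add_zero, mul_add, Algebra.algebraMap_eq_smul_one, mul_smul_comm, mul_one]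
  have hzx : Commute z x := ((SkewCommute.mul_left h2' h1).commute hρ2ρ).add_left
    (Algebra.commute_algebraMap_left c _)
  have hzy₁ : SkewCommute (ρ ^ 2) z y₁ := (skewCommute_mul_add_algebraMap_left h12 hc).symm hρ2ρ
  have hzy₂ : SkewCommute ρ z y₂ := skewCommute_mul_add_algebraMap_right h12 hc
  have hy₂y₁ := mul_eq_smul_mul_add_of_mul_eq h12 hρ2ρ
  refine ⟨0, c, ?_⟩
  rw [hw]
  exact ⟨((Commute.refl (x : A)).units_inv_left.mul_left hzx).eq,
    (((SkewCommute.units_inv_left h1).mul_left hzy₁).commute hρρ2).eq,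
    (((SkewCommute.units_inv_left h2').mul_left hzy₂).commute hρ2ρ).eq,
    ⟨(commute_pow_three_of_mul_eq_smul_mul_add hρ (γ := 0) (by simpa using h1)).eq,
      (Commute.pow_self y₁ 3).eq, (commute_pow_three_of_mul_eq_smul_mul_add hρ h12).eq⟩,
    ⟨(commute_pow_three_of_mul_eq_smul_mul_add hρ2 (γ := 0) (by simpa using h2')).eq,
      (commute_pow_three_of_mul_eq_smul_mul_add hρ2 hy₂y₁).eq, (Commute.pow_self y₂ 3).eq⟩⟩

/-- Centrality in the Clifford algebra of a cubic: with `x³ = α`, `y₁x = ρxy₁`,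
`y₂x = ρ²xy₂`, `y₁y₂ = ρy₂y₁ + γ`, there are scalars `c₁, c₂` such that
`w = x⁻¹y₂y₁ + c₁x + c₂x⁻¹`, `y₁³`, and `y₂³` are central (commute with the
generators `x, y₁, y₂`). -/
theorem clifford_cubic_central_elements
    {F A : Type*} [Field F] [Ring A] [Algebra F A]
    (h2 : (2 : F) ≠ 0) (h3 : (3 : F) ≠ 0)
    (ρ : F) (hρ : IsPrimitiveRoot ρ 3)
    (α γ : F) (hα : α ≠ 0)
    (x : Aˣ) (y₁ y₂ : A)
    (hx3 : (x : A) ^ 3 = algebraMap F A α)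
    (h1 : y₁ * (x : A) = ρ • ((x : A) * y₁))
    (h2' : y₂ * (x : A) = ρ ^ 2 • ((x : A) * y₂))
    (h12 : y₁ * y₂ = ρ • (y₂ * y₁) + algebraMap F A γ) :
    ∃ c₁ c₂ : F,
      (((x⁻¹ : Aˣ) : A) * (y₂ * y₁) + c₁ • (x : A) + c₂ • ((x⁻¹ : Aˣ) : A)) * (x : A)
          = (x : A) * (((x⁻¹ : Aˣ) : A) * (y₂ * y₁) + c₁ • (x : A) + c₂ • ((x⁻¹ : Aˣ) : A)) ∧
      (((x⁻¹ : Aˣ) : A) * (y₂ * y₁) + c₁ • (x : A) + c₂ • ((x⁻¹ : Aˣ) : A)) * y₁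
          = y₁ * (((x⁻¹ : Aˣ) : A) * (y₂ * y₁) + c₁ • (x : A) + c₂ • ((x⁻¹ : Aˣ) : A)) ∧
      (((x⁻¹ : Aˣ) : A) * (y₂ * y₁) + c₁ • (x : A) + c₂ • ((x⁻¹ : Aˣ) : A)) * y₂
          = y₂ * (((x⁻¹ : Aˣ) : A) * (y₂ * y₁) + c₁ • (x : A) + c₂ • ((x⁻¹ : Aˣ) : A)) ∧
      (y₁ ^ 3 * (x : A) = (x : A) * y₁ ^ 3 ∧ y₁ ^ 3 * y₁ = y₁ * y₁ ^ 3 ∧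
        y₁ ^ 3 * y₂ = y₂ * y₁ ^ 3) ∧
      (y₂ ^ 3 * (x : A) = (x : A) * y₂ ^ 3 ∧ y₂ ^ 3 * y₁ = y₁ * y₂ ^ 3 ∧
        y₂ ^ 3 * y₂ = y₂ * y₂ ^ 3) :=
  clifford_cubic_central_elements_general ρ hρ γ x y₁ y₂ h1 h2' h12
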